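/- arXiv:gr-qc/0212085 — 2 statements merged into one kernel-verified Lean document; each statement's English description precedes it below -/
import Mathlib

section
/- For a 2-form F on ℝ⁴ define its energy (Maxwell–Minkowski) tensor as the endomorphism T := −(1/2)(F̂∘F̂ + (*F)̂∘(*F)̂). Then: (i) T = −(F̂∘F̂ − (1/4)·tr(F̂∘F̂)·id), i.e. T is minus the traceless part of F̂∘F̂; (ii) tr T = 0; (iii) 4·(T∘T) = tr(T∘T)·id; (iv) tr(T∘T) = (1/4)·[ (tr(F̂∘F̂))² + (tr(F̂∘(*F)̂))² ]; in particular tr(T∘T) ≠ 0 if and only if F is regular (i.e. the two invariants tr(F̂∘F̂) and tr(F̂∘(*F)̂) do not both vanish). -/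
/-!
Write `A = F̂` and `B = (*F)̂`. In dimension four two identities are checked on the six
components of `F`: `A² - B² = ½ tr(A²)·1` and `AB = BA = ¼ tr(AB)·1`. The rest is algebra:
the first gives `T = -(A² - ¼ tr(A²)·1)`, and since `A²` and `B²` then commute,
`(A² + B²)² = (A² - B²)² + 2(A²B² + B²A²)` makes `T²` the scalar
`(1/16)(tr(A²)² + tr(AB)²)`.
-/

open Matrix Real

/-- Spacetime `ℝ⁴` with the standard basis. -/
abbrev V4 : Type := Fin 4 → ℝ

/-- `4×4` real matrices: components of bilinear forms / endomorphisms of `ℝ⁴`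
in the standard basis `(e₀,e₁,e₂,e₃)`. -/
abbrev Mat4 : Type := Matrix (Fin 4) (Fin 4) ℝ

/-- The Minkowski metric `diag(-1,1,1,1)` (it equals its own inverse). -/
noncomputable def ηm : Mat4 := Matrix.diagonal ![-1, 1, 1, 1]

/-- The Minkowski bilinear form `η(x,y) = -x₀y₀ + x₁y₁ + x₂y₂ + x₃y₃`. -/
noncomputable def ηb (x y : V4) : ℝ := x ⬝ᵥ ηm *ᵥ y

/-- A vector `x` is timelike if `η(x,x) < 0`. -/
noncomputable def Timelike (x : V4) : Prop := ηb x x < 0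

/-- Evaluation of the bilinear form with component matrix `B`:
`B(x,y) = Σ xᵅ B_{αβ} yᵝ`. -/
noncomputable def bil (B : Mat4) (x y : V4) : ℝ := x ⬝ᵥ B *ᵥ y

/-- A 2-form is a skew-symmetric bilinear form. -/
noncomputable def IsTwoForm (B : Mat4) : Prop := Bᵀ = -B

/-- The endomorphism `B̂` associated with the bilinear form `B`, i.e. the unique
endomorphism with `η(B̂x, y) = B(x,y)` for all `x, y`.  (Indeed
`ηb (hat B *ᵥ x) y = bil B x y`.) -/
noncomputable def hat (B : Mat4) : Mat4 := ηm * Bᵀ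

/-- The totally antisymmetric Levi-Civita symbol on four indices, `ε₀₁₂₃ = 1`. -/
noncomputable def lc (a b c d : Fin 4) : ℝ :=
  (((b : ℕ) : ℝ) - ((a : ℕ) : ℝ)) * (((c : ℕ) : ℝ) - ((a : ℕ) : ℝ)) *
    (((d : ℕ) : ℝ) - ((a : ℕ) : ℝ)) * (((c : ℕ) : ℝ) - ((b : ℕ) : ℝ)) *
    (((d : ℕ) : ℝ) - ((b : ℕ) : ℝ)) * (((d : ℕ) : ℝ) - ((c : ℕ) : ℝ)) / 12

/-- The Hodge dual of a 2-form:
`(*F)(e_α,e_β) = (1/2) Σ ε_{αβγδ} η^{γμ} η^{δν} F(e_μ,e_ν)`. -/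
noncomputable def hodge (F : Mat4) : Mat4 :=
  Matrix.of fun α β => (1/2) * ∑ γ, ∑ δ, ∑ μ, ∑ ν, lc α β γ δ * ηm γ μ * ηm δ ν * F μ ν

/-- A unitary 2-form: `tr(Û∘Û) = 2` and `tr(Û∘(*U)̂) = 0`. -/
noncomputable def IsUnitary (U : Mat4) : Prop :=
  IsTwoForm U ∧ (hat U * hat U).trace = 2 ∧ (hat U * hat (hodge U)).trace = 0

/-- An endomorphism `L` is η-self-adjoint if `η(Lx,y) = η(x,Ly)` for all `x, y`. -/
noncomputable def SelfAdj (L : Mat4) : Prop := ∀ x y : V4, ηb (L *ᵥ x) y = ηb x (L *ᵥ y)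

section EnergyAlgebra

variable {K R : Type*} [Field K] [CharZero K] [Ring R] [Algebra K R] {A B T : R} {s t : K}

theorem eq_neg_sub_smul_one_of_mul_self_sub_mul_self
    (hT : T = (-(1/2) : K) • (A * A + B * B)) (h : A * A - B * B = ((1/2) * s) • 1) :
    T = -(A * A - ((1/4) * s) • 1) := by
  rw [hT, show B * B = A * A - ((1/2) * s) • (1 : R) by rw [← h, sub_sub_cancel]]
  module

theorem mul_self_eq_smul_one_of_mul_eq_smul_one
    (hT : T = (-(1/2) : K) • (A * A + B * B)) (h : A * A - B * B = ((1/2) * s) • 1)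
    (hAB : A * B = ((1/4) * t) • 1) (hBA : B * A = ((1/4) * t) • 1) :
    T * T = ((1/16) * (s ^ 2 + t ^ 2)) • 1 := by
  have hAABB : A * A * (B * B) = ((1/4) * t) ^ 2 • (1 : R) := by
    rw [mul_assoc, ← mul_assoc A B B, hAB, smul_mul_assoc, one_mul, mul_smul_comm, hAB,
      smul_smul, sq]
  have hBBAA : B * B * (A * A) = ((1/4) * t) ^ 2 • (1 : R) := by
    rw [mul_assoc, ← mul_assoc B A A, hBA, smul_mul_assoc, one_mul, mul_smul_comm, hBA,
      smul_smul, sq]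
  have hsq : (A * A + B * B) * (A * A + B * B) =
      (A * A - B * B) * (A * A - B * B) + 2 * (A * A * (B * B) + B * B * (A * A)) := by
    noncomm_ring
  rw [hT, smul_mul_smul, hsq, h, hAABB, hBBAA, smul_mul_smul_comm, mul_one, two_mul]
  module

end EnergyAlgebra

def skewMat4 (a b c d e f : ℝ) : Mat4 :=
  !![0, a, b, c; -a, 0, d, e; -b, -d, 0, f; -c, -e, -f, 0]

theorem IsTwoForm.eq_skewMat4 {F : Mat4} (hF : IsTwoForm F) :
    F = skewMat4 (F 0 1) (F 0 2) (F 0 3) (F 1 2) (F 1 3) (F 2 3) := by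
  have hskew : ∀ i j, F i j = -F j i := fun i j => by
    simpa using congrFun (congrFun hF j) i
  have hdiag : ∀ i, F i i = 0 := fun i => by linarith [hskew i i]
  ext i j
  fin_cases i <;> fin_cases j <;>
    simp [skewMat4, hdiag, hskew 1 0, hskew 2 0, hskew 3 0, hskew 2 1, hskew 3 1, hskew 3 2]

theorem hodge_apply (F : Mat4) (α β : Fin 4) :
    hodge F α β = (1/2) * ∑ γ, ∑ δ, lc α β γ δ * ηm γ γ * ηm δ δ * F γ δ := by
  simp only [hodge, ηm, Matrix.of_apply, Matrix.diagonal_apply, mul_ite, mul_zero, ite_mul,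
    zero_mul, Finset.sum_ite_eq, Finset.mem_univ, if_true]

theorem hodge_skewMat4 (a b c d e f : ℝ) :
    hodge (skewMat4 a b c d e f) = skewMat4 f (-e) d (-c) b (-a) := by
  ext α β
  rw [hodge_apply]
  fin_cases α <;> fin_cases β <;> simp [skewMat4, lc, ηm, Fin.sum_univ_four] <;> ring

theorem hat_skewMat4 (a b c d e f : ℝ) :
    hat (skewMat4 a b c d e f) = !![0, a, b, c; a, 0, -d, -e; b, d, 0, -f; c, e, f, 0] := by
  ext i j
  fin_cases i <;> fin_cases j <;> simp [hat, skewMat4, ηm, Matrix.mul_apply, Fin.sum_univ_four]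

theorem IsTwoForm.hat_mul_self_sub_hat_hodge_mul_self {F : Mat4} (hF : IsTwoForm F) :
    hat F * hat F - hat (hodge F) * hat (hodge F) = ((1/2) * (hat F * hat F).trace) • 1 := by
  rw [hF.eq_skewMat4, hodge_skewMat4, hat_skewMat4, hat_skewMat4]
  ext i j
  fin_cases i <;> fin_cases j <;> simp [Matrix.trace, Fin.sum_univ_four] <;> ring

theorem IsTwoForm.hat_mul_hat_hodge {F : Mat4} (hF : IsTwoForm F) :
    hat F * hat (hodge F) = ((1/4) * (hat F * hat (hodge F)).trace) • 1 := by
  rw [hF.eq_skewMat4, hodge_skewMat4, hat_skewMat4, hat_skewMat4]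
  ext i j
  fin_cases i <;> fin_cases j <;> simp [Matrix.trace, Fin.sum_univ_four] <;> ring

theorem IsTwoForm.hat_hodge_mul_hat {F : Mat4} (hF : IsTwoForm F) :
    hat (hodge F) * hat F = ((1/4) * (hat F * hat (hodge F)).trace) • 1 := by
  rw [hF.eq_skewMat4, hodge_skewMat4, hat_skewMat4, hat_skewMat4]
  ext i j
  fin_cases i <;> fin_cases j <;> simp [Matrix.trace, Fin.sum_univ_four] <;> ring

theorem trace_smul_one_mat4 (c : ℝ) : (c • 1 : Mat4).trace = 4 * c := by
  simp [mul_comm]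

/-- Properties of the energy (Maxwell–Minkowski) tensor
`T = -(1/2)(F̂∘F̂ + (*F)̂∘(*F)̂)` of a 2-form `F`. -/
theorem stmt3 (F : Mat4) (hF : IsTwoForm F) (T : Mat4)
    (hT : T = (-(1/2) : ℝ) • (hat F * hat F + hat (hodge F) * hat (hodge F))) :
    T = -(hat F * hat F - ((1/4) * (hat F * hat F).trace) • (1 : Mat4)) ∧
    T.trace = 0 ∧
    (4 : ℝ) • (T * T) = (T * T).trace • (1 : Mat4) ∧
    (T * T).trace =
      (1/4) * (((hat F * hat F).trace)^2 + ((hat F * hat (hodge F)).trace)^2) ∧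
    ((T * T).trace ≠ 0 ↔
      ¬((hat F * hat F).trace = 0 ∧ (hat F * hat (hodge F)).trace = 0)) := by
  have hsub := hF.hat_mul_self_sub_hat_hodge_mul_self
  have hT' := eq_neg_sub_smul_one_of_mul_self_sub_mul_self hT hsub
  have hTT := mul_self_eq_smul_one_of_mul_eq_smul_one hT hsub hF.hat_mul_hat_hodge
    hF.hat_hodge_mul_hat
  have htrTT : (T * T).trace =
      (1/4) * (((hat F * hat F).trace)^2 + ((hat F * hat (hodge F)).trace)^2) := by
    rw [hTT, trace_smul_one_mat4]; ring
  refine ⟨hT', ?_, ?_, htrTT, ?_⟩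
  · rw [hT', trace_neg, trace_sub, trace_smul_one_mat4]; ring
  · rw [hTT, trace_smul_one_mat4, smul_smul]
  · rw [htrTT, sq, sq, ← mul_self_add_mul_self_eq_zero]
    simp
end

section
/- Algebraic Rainich theorem (structure form): let T be an η-self-adjoint endomorphism of ℝ⁴ with tr T = 0, 4·(T∘T) = tr(T∘T)·id, tr(T∘T) ≠ 0, and η(Tx,x) > 0 for every timelike vector x. Then there exist a real number c > 0 and a 2-dimensional subspace V of ℝ⁴ on which η is nondegenerate of signature (−,+), such that T = −c·(π_V − π_{V⊥}), where π_V and π_{V⊥} are the η-orthogonal projections onto V and its η-orthogonal complement V⊥. -/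
open Matrix Real

/-- The η-orthogonal complement of a subspace of `ℝ⁴`. -/
def ηOrth (W : Submodule ℝ V4) : Submodule ℝ V4 where
  carrier := {z : V4 | ∀ w ∈ W, ηb z w = 0}
  add_mem' := by
    intro a b ha hb w hw
    simp only [ηb, Set.mem_setOf_eq] at *
    rw [add_dotProduct, ha w hw, hb w hw, add_zero]
  zero_mem' := by
    intro w hw
    simp [ηb]
  smul_mem' := by
    intro c a ha w hw
    simp only [ηb, Set.mem_setOf_eq] at *
    rw [smul_dotProduct, ha w hw, smul_zero]

/-
Write `T² = (μ/4)·1` with `μ = tr(T²) ≠ 0`.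

If `μ = -4k² < 0`, the energy condition fails: for timelike `x` with `η(Tx, x) > 0`, the vector
`y = x - k⁻¹ T x` has `η(y, y) = -2k⁻¹ η(Tx, x) < 0` but `η(Ty, y) = 2k η(x, x) < 0`.

If `μ = 4c² > 0`, then `p = (c - T)/2c` and `q = (c + T)/2c` are complementary projections onto
the `∓c`-eigenspaces of `T`, which are η-orthogonal since `T` is η-self-adjoint, and
`T = -c(p - q)`. As `tr T = 0`, `tr p = 2`, so `V = range p` is a plane. For timelike `x`, the
energy condition `c(η(qx, qx) - η(px, px)) > 0` together with `η(px, px) + η(qx, qx) < 0` makes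
`px` timelike; by reverse Cauchy–Schwarz, vectors of `V` orthogonal to it are spacelike, which
gives `V` signature `(-, +)`.
-/

lemma ηb_apply (x y : V4) : ηb x y = -(x 0 * y 0) + x 1 * y 1 + x 2 * y 2 + x 3 * y 3 := by
  simp [ηb, ηm, mulVec, dotProduct, Fin.sum_univ_four, diagonal_apply]

lemma ηb_comm (x y : V4) : ηb x y = ηb y x := by
  rw [ηb_apply, ηb_apply]; ring

lemma ηb_add_left (x y z : V4) : ηb (x + y) z = ηb x z + ηb y z := by
  simp only [ηb_apply, Pi.add_apply]; ring

lemma ηb_add_right (x y z : V4) : ηb x (y + z) = ηb x y + ηb x z := by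
  simp only [ηb_apply, Pi.add_apply]; ring

lemma ηb_sub_left (x y z : V4) : ηb (x - y) z = ηb x z - ηb y z := by
  simp only [ηb_apply, Pi.sub_apply]; ring

lemma ηb_sub_right (x y z : V4) : ηb x (y - z) = ηb x y - ηb x z := by
  simp only [ηb_apply, Pi.sub_apply]; ring

lemma ηb_smul_left (a : ℝ) (x y : V4) : ηb (a • x) y = a * ηb x y := by
  simp only [ηb_apply, Pi.smul_apply, smul_eq_mul]; ring

lemma ηb_smul_right (a : ℝ) (x y : V4) : ηb x (a • y) = a * ηb x y := by
  simp only [ηb_apply, Pi.smul_apply, smul_eq_mul]; ring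

lemma timelike_single_zero : Timelike (Pi.single 0 1) := by
  simp [Timelike, ηb_apply]

lemma ηb_self_smul_inv_sqrt_neg {w : V4} (hw : ηb w w < 0) :
    ηb ((√(-ηb w w))⁻¹ • w) ((√(-ηb w w))⁻¹ • w) = -1 := by
  have hs : √(-ηb w w) ^ 2 = -ηb w w := sq_sqrt (by linarith)
  have hs0 : √(-ηb w w) ≠ 0 := (sqrt_pos.mpr (by linarith)).ne'
  rw [ηb_smul_left, ηb_smul_right]
  field_simp
  linarith

lemma ηb_self_smul_inv_sqrt {w : V4} (hw : 0 < ηb w w) :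
    ηb ((√(ηb w w))⁻¹ • w) ((√(ηb w w))⁻¹ • w) = 1 := by
  have hs : √(ηb w w) ^ 2 = ηb w w := sq_sqrt hw.le
  have hs0 : √(ηb w w) ≠ 0 := (sqrt_pos.mpr hw).ne'
  rw [ηb_smul_left, ηb_smul_right]
  field_simp
  linarith

/-- Reverse Cauchy–Schwarz inequality. -/
lemma ηb_self_pos_of_ηb_eq_zero {x y : V4} (hx : Timelike x) (hxy : ηb x y = 0) (hy : y ≠ 0) :
    0 < ηb y y := by
  rw [Timelike, ηb_apply] at hx
  rw [ηb_apply] at hxy ⊢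
  by_contra! hyy
  apply hy
  have hdot : x 0 * y 0 = x 1 * y 1 + x 2 * y 2 + x 3 * y 3 := by linarith
  have hcs : (x 0 * y 0) ^ 2 ≤ (x 1 ^ 2 + x 2 ^ 2 + x 3 ^ 2) * (y 1 ^ 2 + y 2 ^ 2 + y 3 ^ 2) := by
    rw [hdot]
    nlinarith [sq_nonneg (x 1 * y 2 - x 2 * y 1), sq_nonneg (x 1 * y 3 - x 3 * y 1),
      sq_nonneg (x 2 * y 3 - x 3 * y 2)]
  have hy0 : y 0 ^ 2 = 0 := by
    have hX : (x 1 ^ 2 + x 2 ^ 2 + x 3 ^ 2) * (y 1 ^ 2 + y 2 ^ 2 + y 3 ^ 2)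
        ≤ (x 1 ^ 2 + x 2 ^ 2 + x 3 ^ 2) * y 0 ^ 2 := by gcongr; nlinarith
    have hgap : 0 < x 0 ^ 2 - (x 1 ^ 2 + x 2 ^ 2 + x 3 ^ 2) := by nlinarith
    have : (x 0 ^ 2 - (x 1 ^ 2 + x 2 ^ 2 + x 3 ^ 2)) * y 0 ^ 2 ≤ 0 := by nlinarith
    exact le_antisymm (nonpos_of_mul_nonpos_right this hgap) (sq_nonneg _)
  ext i
  fin_cases i <;>
    simp only [Fin.zero_eta, Fin.mk_one, Fin.reduceFinMk, Fin.isValue, Pi.zero_apply] <;>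
    nlinarith [sq_nonneg (y 1), sq_nonneg (y 2), sq_nonneg (y 3)]

lemma exists_ηb_eq_zero_of_finrank_eq_two {V : Submodule ℝ V4} (hV : Module.finrank ℝ V = 2)
    {x : V4} (hxV : x ∈ V) (hxx : ηb x x = -1) : ∃ y ∈ V, y ≠ 0 ∧ ηb x y = 0 := by
  have hx0 : x ≠ 0 := by rintro rfl; simp [ηb_apply] at hxx
  have hlt : ℝ ∙ x < V := by
    refine lt_of_le_of_ne ((Submodule.span_singleton_le_iff_mem _ _).mpr hxV) fun h => ?_
    have := finrank_span_singleton (K := ℝ) hx0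
    rw [h, hV] at this
    exact absurd this (by norm_num)
  obtain ⟨v, hvV, hvx⟩ := SetLike.exists_of_lt hlt
  refine ⟨v + ηb v x • x, V.add_mem hvV (V.smul_mem _ hxV), fun h => hvx ?_, ?_⟩
  · rw [add_eq_zero_iff_eq_neg, ← neg_smul] at h
    exact h ▸ Submodule.smul_mem _ _ (Submodule.mem_span_singleton_self x)
  · rw [ηb_add_right, ηb_smul_right, hxx, ηb_comm]
    ring

lemma exists_orthonormal_pair_of_finrank_eq_two {V : Submodule ℝ V4}
    (hV : Module.finrank ℝ V = 2) {w : V4} (hwV : w ∈ V) (hw : Timelike w) :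
    ∃ x ∈ V, ∃ y ∈ V, ηb x x = -1 ∧ ηb y y = 1 ∧ ηb x y = 0 := by
  set x := (√(-ηb w w))⁻¹ • w
  have hxx : ηb x x = -1 := ηb_self_smul_inv_sqrt_neg hw
  have hxV : x ∈ V := V.smul_mem _ hwV
  obtain ⟨y, hyV, hy0, hxy⟩ := exists_ηb_eq_zero_of_finrank_eq_two hV hxV hxx
  have hyy : 0 < ηb y y := ηb_self_pos_of_ηb_eq_zero (by rw [Timelike, hxx]; norm_num) hxy hy0
  refine ⟨x, hxV, (√(ηb y y))⁻¹ • y, V.smul_mem _ hyV, hxx, ηb_self_smul_inv_sqrt hyy, ?_⟩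
  rw [ηb_smul_right, hxy, mul_zero]

lemma mulVec_mulVec_of_mul_self_eq_smul {n R : Type*} [Fintype n] [DecidableEq n] [CommRing R]
    {T : Matrix n n R} {a : R} (h : T * T = a • 1) (z : n → R) : T *ᵥ (T *ᵥ z) = a • z := by
  rw [mulVec_mulVec, h, smul_mulVec, one_mulVec]

def EnergyCondition (T : Mat4) : Prop := ∀ x : V4, Timelike x → 0 < ηb (T *ᵥ x) x

namespace SelfAdj

variable {T : Mat4}

lemma ηb_eq_zero_of_mulVec_eq_smul (hT : SelfAdj T) {u v : V4} {a b : ℝ}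
    (hu : T *ᵥ u = a • u) (hv : T *ᵥ v = b • v) (hab : a ≠ b) : ηb u v = 0 := by
  have h := hT u v
  rw [hu, hv, ηb_smul_left, ηb_smul_right] at h
  exact (mul_eq_zero.mp (by linarith : (a - b) * ηb u v = 0)).resolve_left (sub_ne_zero.mpr hab)

lemma not_energyCondition_of_mul_self_eq_neg (hT : SelfAdj T) {k : ℝ} (hk : 0 < k)
    (hTT : T * T = (-k ^ 2) • 1) : ¬ EnergyCondition T := by
  intro hen
  set x : V4 := Pi.single 0 1
  have hx : Timelike x := timelike_single_zero
  have hTx : 0 < ηb (T *ᵥ x) x := hen x hx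
  have hTxTx : ηb (T *ᵥ x) (T *ᵥ x) = -k ^ 2 * ηb x x := by
    rw [hT, mulVec_mulVec_of_mul_self_eq_smul hTT, ηb_smul_right]
  have hTy : T *ᵥ (x - k⁻¹ • T *ᵥ x) = T *ᵥ x + k • x := by
    rw [mulVec_sub, mulVec_smul, mulVec_mulVec_of_mul_self_eq_smul hTT, smul_smul]
    match_scalars <;> field_simp
  have hy : Timelike (x - k⁻¹ • T *ᵥ x) := by
    have : ηb (x - k⁻¹ • T *ᵥ x) (x - k⁻¹ • T *ᵥ x) = -2 * k⁻¹ * ηb (T *ᵥ x) x := by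
      simp only [ηb_sub_left, ηb_sub_right, ηb_smul_left, ηb_smul_right, hTxTx, ηb_comm x]
      field_simp
      ring
    rw [Timelike, this]
    have : 0 < k⁻¹ := inv_pos.mpr hk
    nlinarith
  have := hen _ hy
  rw [hTy] at this
  simp only [ηb_add_left, ηb_sub_right, ηb_smul_left, ηb_smul_right, hTxTx, ηb_comm x] at this
  field_simp at this
  nlinarith [mul_pos hk (neg_pos.mpr (show ηb x x < 0 from hx))]

end SelfAdj

section Projections

variable {T : Mat4} {c : ℝ}

noncomputable def projNeg (T : Mat4) (c : ℝ) : V4 →ₗ[ℝ] V4 :=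
  (2 * c)⁻¹ • (c • LinearMap.id - toLin' T)

noncomputable def projPos (T : Mat4) (c : ℝ) : V4 →ₗ[ℝ] V4 :=
  (2 * c)⁻¹ • (c • LinearMap.id + toLin' T)

lemma projNeg_apply (z : V4) : projNeg T c z = (2 * c)⁻¹ • (c • z - T *ᵥ z) := rfl

lemma projPos_apply (z : V4) : projPos T c z = (2 * c)⁻¹ • (c • z + T *ᵥ z) := rfl

lemma projNeg_add_projPos (hc : c ≠ 0) (z : V4) : projNeg T c z + projPos T c z = z := by
  rw [projNeg_apply, projPos_apply]
  match_scalars <;> field_simp <;> ring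

lemma mulVec_eq_neg_smul_projNeg_sub_projPos (hc : c ≠ 0) (z : V4) :
    T *ᵥ z = -c • (projNeg T c z - projPos T c z) := by
  rw [projNeg_apply, projPos_apply]
  match_scalars <;> field_simp <;> ring

lemma mulVec_projNeg (hTT : T * T = c ^ 2 • 1) (z : V4) :
    T *ᵥ projNeg T c z = -c • projNeg T c z := by
  rw [projNeg_apply, mulVec_smul, mulVec_sub, mulVec_smul, mulVec_mulVec_of_mul_self_eq_smul hTT]
  match_scalars <;> ring

lemma mulVec_projPos (hTT : T * T = c ^ 2 • 1) (z : V4) :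
    T *ᵥ projPos T c z = c • projPos T c z := by
  rw [projPos_apply, mulVec_smul, mulVec_add, mulVec_smul, mulVec_mulVec_of_mul_self_eq_smul hTT]
  match_scalars <;> ring

lemma isProj_projNeg (hc : c ≠ 0) (hTT : T * T = c ^ 2 • 1) :
    LinearMap.IsProj (LinearMap.range (projNeg T c)) (projNeg T c) := by
  refine ⟨LinearMap.mem_range_self _, ?_⟩
  rintro _ ⟨z, rfl⟩
  rw [projNeg_apply (projNeg T c z), mulVec_projNeg hTT]
  match_scalars
  field_simp
  ring

lemma trace_projNeg (hc : c ≠ 0) (htr : T.trace = 0) : LinearMap.trace ℝ V4 (projNeg T c) = 2 := by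
  rw [projNeg, map_smul, map_sub, map_smul, LinearMap.trace_id, trace_toLin'_eq, htr,
    Module.finrank_fin_fun, smul_eq_mul, smul_eq_mul]
  field_simp
  ring

lemma finrank_range_projNeg (hc : c ≠ 0) (hTT : T * T = c ^ 2 • 1) (htr : T.trace = 0) :
    Module.finrank ℝ (LinearMap.range (projNeg T c)) = 2 := by
  have h := (isProj_projNeg hc hTT).trace
  rw [trace_projNeg hc htr] at h
  exact_mod_cast h.symm

lemma ηb_projNeg_projPos (hT : SelfAdj T) (hc : c ≠ 0) (hTT : T * T = c ^ 2 • 1) (w z : V4) :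
    ηb (projNeg T c w) (projPos T c z) = 0 :=
  SelfAdj.ηb_eq_zero_of_mulVec_eq_smul hT (mulVec_projNeg hTT w) (mulVec_projPos hTT z)
    (by contrapose! hc; linarith)

lemma projPos_mem_ηOrth (hT : SelfAdj T) (hc : c ≠ 0) (hTT : T * T = c ^ 2 • 1) (z : V4) :
    projPos T c z ∈ ηOrth (LinearMap.range (projNeg T c)) := by
  rintro _ ⟨w, rfl⟩
  rw [ηb_comm]
  exact ηb_projNeg_projPos hT hc hTT w z

lemma timelike_projNeg (hT : SelfAdj T) (hc : 0 < c) (hTT : T * T = c ^ 2 • 1)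
    (hen : EnergyCondition T) {x : V4} (hx : Timelike x) : Timelike (projNeg T c x) := by
  set p := projNeg T c x
  set q := projPos T c x
  have hpq : ηb p q = 0 := ηb_projNeg_projPos hT hc.ne' hTT x x
  have hxpq : x = p + q := (projNeg_add_projPos hc.ne' x).symm
  have hTx : T *ᵥ x = -c • (p - q) := mulVec_eq_neg_smul_projNeg_sub_projPos hc.ne' x
  have hen' := hen x hx
  rw [hTx, hxpq] at hen'
  rw [Timelike, hxpq] at hx
  simp only [ηb_add_left, ηb_add_right, ηb_sub_left, ηb_smul_left, ηb_comm q p, hpq] at hx hen'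
  rw [Timelike]
  nlinarith

end Projections

/-- Algebraic Rainich theorem (structure form): a trace-free η-self-adjoint
endomorphism whose square is a nonzero multiple of the identity and which
satisfies the energy condition is `-c(π_V - π_{V⊥})` for some `c > 0` and some
timelike 2-plane `V`. -/
theorem stmt7 (T : Mat4) (hsa : SelfAdj T) (h0 : T.trace = 0)
    (hsq : (4 : ℝ) • (T * T) = (T * T).trace • (1 : Mat4))
    (hne : (T * T).trace ≠ 0)
    (hen : ∀ x : V4, Timelike x → 0 < ηb (T *ᵥ x) x) :
    ∃ c : ℝ, 0 < c ∧ ∃ V : Submodule ℝ V4, Module.finrank ℝ V = 2 ∧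
      (∃ x ∈ V, ∃ y ∈ V, ηb x x = -1 ∧ ηb y y = 1 ∧ ηb x y = 0) ∧
      ∃ p q : V4 →ₗ[ℝ] V4,
        (∀ z, p z ∈ V) ∧ (∀ z, z - p z ∈ ηOrth V) ∧
        (∀ z, q z ∈ ηOrth V) ∧ (∀ z, z - q z ∈ V) ∧
        ∀ z, T *ᵥ z = -c • (p z - q z) := by
  set μ := (T * T).trace
  have hTT : T * T = (μ / 4) • 1 := by
    rw [div_eq_inv_mul, ← smul_smul, ← hsq, smul_smul, inv_mul_cancel₀ four_ne_zero, one_smul]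
  obtain hμ | hμ := hne.lt_or_gt
  · refine absurd hen (hsa.not_energyCondition_of_mul_self_eq_neg (k := √(-μ) / 2)
      (div_pos (sqrt_pos.mpr (neg_pos.mpr hμ)) two_pos) ?_)
    rw [hTT, div_pow, sq_sqrt (by linarith)]
    congr 1
    ring
  set c := √μ / 2
  have hc : 0 < c := by positivity
  have hTc : T * T = c ^ 2 • 1 := by
    rw [hTT, div_pow, sq_sqrt hμ.le]
    norm_num
  obtain ⟨x, hxV, y, hyV, hxy⟩ := exists_orthonormal_pair_of_finrank_eq_two
    (finrank_range_projNeg hc.ne' hTc h0) (LinearMap.mem_range_self _ _)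
    (timelike_projNeg hsa hc hTc hen timelike_single_zero)
  refine ⟨c, hc, _, finrank_range_projNeg hc.ne' hTc h0, ⟨x, hxV, y, hyV, hxy⟩, projNeg T c,
    projPos T c, LinearMap.mem_range_self _, fun z => ?_, projPos_mem_ηOrth hsa hc.ne' hTc,
    fun z => ?_, mulVec_eq_neg_smul_projNeg_sub_projPos hc.ne'⟩
  · rw [sub_eq_of_eq_add' (projNeg_add_projPos hc.ne' z).symm]
    exact projPos_mem_ηOrth hsa hc.ne' hTc z
  · rw [sub_eq_of_eq_add (projNeg_add_projPos hc.ne' z).symm]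
    exact LinearMap.mem_range_self _ _
end
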